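/- The groups G(6,4) and G(10,4), the subgroups of SO(3) generated by {R_x^{2π/6}, R_y^{2π/4}} and {R_x^{2π/10}, R_y^{2π/4}} respectively, are not c-equivalent: G(10,4) contains an element of order 5 but G(6,4) contains no element of order 5. -/

import Mathlib

open Real

/-- Rotation by angle `θ` about the `x`-axis, as a `3 × 3` real matrix. -/
noncomputable def Rx (θ : ℝ) : Matrix (Fin 3) (Fin 3) ℝ :=
  !![1, 0, 0; 0, Real.cos θ, -Real.sin θ; 0, Real.sin θ, Real.cos θ]

/-- Rotation by angle `θ` about the `y`-axis, as a `3 × 3` real matrix. -/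
noncomputable def Ry (θ : ℝ) : Matrix (Fin 3) (Fin 3) ℝ :=
  !![Real.cos θ, 0, Real.sin θ; 0, 1, 0; -Real.sin θ, 0, Real.cos θ]

/-- `SO(3)`, realized as the subgroup of the orthogonal group `O(3)` of elements of
determinant `1`. -/
noncomputable def SO3 : Subgroup (Matrix.orthogonalGroup (Fin 3) ℝ) where
  carrier := {A | (A : Matrix (Fin 3) (Fin 3) ℝ).det = 1}
  one_mem' := by simp
  mul_mem' := by
    intro a b ha hb
    simp only [Set.mem_setOf_eq, Matrix.UnitaryGroup.mul_val, Matrix.det_mul] at *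
    rw [ha, hb, mul_one]
  inv_mem' := by
    intro a ha
    simp only [Set.mem_setOf_eq, Matrix.UnitaryGroup.inv_val, Matrix.star_eq_conjTranspose,
      Matrix.det_conjTranspose] at *
    rw [ha]; simp

/-- The underlying matrix of an element of `SO(3)`. -/
def soMat (A : SO3) : Matrix (Fin 3) (Fin 3) ℝ := A.1.1

/-- `H ≺ K` : `H` is conjugate (in the ambient group) to a subgroup of `K`. -/
def ConjLE {G : Type*} [Group G] (H K : Subgroup G) : Prop :=
  ∃ g : G, Subgroup.map (MulAut.conj g).toMonoidHom H ≤ K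

/-- `H` and `K` are c-equivalent: each is conjugate to a subgroup of the other. -/
def CEquiv {G : Type*} [Group G] (H K : Subgroup G) : Prop :=
  ConjLE H K ∧ ConjLE K H

section Aux

open Matrix

lemma soMat_mul (g h : SO3) : soMat (g * h) = soMat g * soMat h := rfl
lemma soMat_one : soMat 1 = 1 := rfl
lemma soMat_inj : Function.Injective soMat := fun _ _ h => Subtype.ext (Subtype.ext h)
lemma soMat_pow (g : SO3) (n : ℕ) : soMat (g ^ n) = soMat g ^ n := by
  induction n with
  | zero => simp [soMat_one]
  | succ n ih => rw [pow_succ, pow_succ, soMat_mul, ih]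

lemma soMat_orth (g : SO3) : (soMat g)ᵀ * soMat g = 1 := by
  have := g.1.2
  rw [Matrix.mem_unitaryGroup_iff'] at this
  simpa [soMat, Matrix.star_eq_conjTranspose] using this

lemma soMat_det (g : SO3) : (soMat g).det = 1 := g.2

lemma soMat_inv (g : SO3) : soMat g⁻¹ = (soMat g)ᵀ := by
  simp [soMat, Matrix.UnitaryGroup.inv_val, Matrix.star_eq_conjTranspose]

lemma Rx_mul (θ φ : ℝ) : Rx θ * Rx φ = Rx (θ + φ) := by
  ext i j
  fin_cases i <;> fin_cases j <;>
    simp [Rx, Matrix.mul_apply, Fin.sum_univ_three, Real.cos_add, Real.sin_add,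
      Matrix.vecHead, Matrix.vecTail] <;> ring

lemma Rx_two_pi : Rx (2 * π) = 1 := by
  ext i j
  fin_cases i <;> fin_cases j <;>
    simp [Rx, Real.cos_two_pi, Real.sin_two_pi, Matrix.one_apply,
      Matrix.vecHead, Matrix.vecTail]

/-- Cayley–Hamilton for `3×3` real matrices, with the middle coefficient expressed as
the trace of the adjugate. -/
lemma ch3 (M : Matrix (Fin 3) (Fin 3) ℝ) :
    M * M * M = M.trace • (M * M) - (M.adjugate).trace • M + M.det • 1 := by
  ext i j
  fin_cases i <;> fin_cases j <;>
    simp [Matrix.mul_apply, Fin.sum_univ_three, Matrix.trace_fin_three, Matrix.det_fin_three,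
      Matrix.adjugate_fin_three, Matrix.one_apply, Matrix.vecHead, Matrix.vecTail] <;> ring

lemma tr_sq (M : Matrix (Fin 3) (Fin 3) ℝ) :
    (M * M).trace = M.trace ^ 2 - 2 * (M.adjugate).trace := by
  simp [Matrix.trace_fin_three, Matrix.mul_apply, Fin.sum_univ_three,
    Matrix.adjugate_fin_three, Matrix.vecHead, Matrix.vecTail]
  ring

lemma adj_eq (g : SO3) : (soMat g).adjugate = (soMat g)ᵀ := by
  have h := Matrix.mul_adjugate (soMat g)
  rw [soMat_det, one_smul] at h
  calc (soMat g).adjugate = ((soMat g)ᵀ * soMat g) * (soMat g).adjugate := by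
        rw [soMat_orth, one_mul]
    _ = (soMat g)ᵀ * (soMat g * (soMat g).adjugate) := by rw [mul_assoc]
    _ = (soMat g)ᵀ := by rw [h, mul_one]

/-- Membership in `ℚ(√3)` (with denominators). -/
def inQ3 (x : ℝ) : Prop := ∃ a b : ℚ, x = a + b * Real.sqrt 3

lemma inQ3_rat (q : ℚ) : inQ3 q := ⟨q, 0, by simp⟩
lemma inQ3_add {x y : ℝ} (hx : inQ3 x) (hy : inQ3 y) : inQ3 (x + y) := by
  obtain ⟨a, b, rfl⟩ := hx; obtain ⟨c, d, rfl⟩ := hy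
  exact ⟨a + c, b + d, by push_cast; ring⟩
lemma inQ3_mul {x y : ℝ} (hx : inQ3 x) (hy : inQ3 y) : inQ3 (x * y) := by
  obtain ⟨a, b, rfl⟩ := hx; obtain ⟨c, d, rfl⟩ := hy
  refine ⟨a * c + 3 * (b * d), a * d + b * c, ?_⟩
  have h3 : Real.sqrt 3 * Real.sqrt 3 = 3 := Real.mul_self_sqrt (by norm_num)
  push_cast
  linear_combination (b : ℝ) * (d : ℝ) * h3

/-- The subgroup of `SO(3)` of matrices with entries in `ℚ(√3)`. -/
noncomputable def K3 : Subgroup SO3 where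
  carrier := {g | ∀ i j, inQ3 (soMat g i j)}
  one_mem' := by
    intro i j
    rw [soMat_one]
    by_cases h : i = j
    · subst h; simpa [Matrix.one_apply] using inQ3_rat 1
    · simpa [Matrix.one_apply, h] using inQ3_rat 0
  mul_mem' := by
    intro a b ha hb i j
    rw [soMat_mul, Matrix.mul_apply, Fin.sum_univ_three]
    exact inQ3_add (inQ3_add (inQ3_mul (ha i 0) (hb 0 j)) (inQ3_mul (ha i 1) (hb 1 j)))
      (inQ3_mul (ha i 2) (hb 2 j))
  inv_mem' := by
    intro a ha i j
    rw [soMat_inv, Matrix.transpose_apply]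
    exact ha j i

lemma not_square_5 : ¬ IsSquare (5 : ℕ) := by
  rintro ⟨k, hk⟩
  have h4 : k < 3 := by nlinarith
  interval_cases k <;> omega

lemma not_square_15 : ¬ IsSquare (15 : ℕ) := by
  rintro ⟨k, hk⟩
  have h4 : k < 4 := by nlinarith
  interval_cases k <;> omega

lemma no_rat_sq (n : ℕ) (hn : ¬ IsSquare n) (q : ℚ) : ((q : ℝ)) ^ 2 ≠ (n : ℝ) := by
  intro h
  have hirr : Irrational (Real.sqrt n) := irrational_sqrt_natCast_iff.mpr hn
  have habs : Real.sqrt ((q : ℝ) ^ 2) = |(q : ℝ)| := Real.sqrt_sq_eq_abs _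
  rw [h] at habs
  exact hirr ⟨|q|, by rw [habs]; push_cast; rfl⟩

lemma no_golden (t : ℝ) (ht : inQ3 t) : t ^ 2 ≠ t + 1 := by
  obtain ⟨a, b, rfl⟩ := ht
  intro h
  have h3 : Real.sqrt 3 * Real.sqrt 3 = 3 := Real.mul_self_sqrt (by norm_num)
  have hirr3 : Irrational (Real.sqrt 3) := by
    simpa using (Nat.prime_three).irrational_sqrt
  by_cases hb : (2 * a - 1) * b = 0
  · rcases mul_eq_zero.1 hb with h1 | h1
    · -- a = 1/2
      have ha : (a : ℝ) = 1 / 2 := by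
        have : (2 * a - 1 : ℚ) = 0 := h1
        have := congrArg (fun q : ℚ => (q : ℝ)) this
        push_cast at this; linarith
      rw [ha] at h
      have hb2 : ((b : ℝ)) ^ 2 * 12 = 5 := by
        linear_combination 4 * h - 4 * (b : ℝ) ^ 2 * h3
      have : ((6 * b : ℚ) : ℝ) ^ 2 = ((15 : ℕ) : ℝ) := by push_cast; linarith [hb2]
      exact no_rat_sq 15 not_square_15 (6 * b) this
    · -- b = 0
      have hb0 : (b : ℝ) = 0 := by exact_mod_cast h1
      rw [hb0] at h
      have : ((2 * a - 1 : ℚ) : ℝ) ^ 2 = ((5 : ℕ) : ℝ) := by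
        push_cast; linear_combination 4 * h
      exact no_rat_sq 5 not_square_5 (2 * a - 1) this
  · -- √3 would be rational
    have hne : ((2 * a - 1) * b : ℝ) ≠ 0 := by
      intro h0
      apply hb
      exact_mod_cast h0
    have : Real.sqrt 3 = ((a + 1 - a ^ 2 - 3 * b ^ 2) / ((2 * a - 1) * b) : ℚ) := by
      push_cast
      rw [eq_div_iff (by push_cast at hne ⊢; exact hne)]
      linear_combination h - (b : ℝ) ^ 2 * h3
    exact hirr3 ⟨_, this.symm⟩

/-- The key fact: no element of a subgroup of `SO(3)` whose matrices have entries in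
`ℚ(√3)` has order `5`. -/
lemma no_order_five (g : SO3) (hg : ∀ i j, inQ3 (soMat g i j)) : orderOf g ≠ 5 := by
  intro h5
  obtain ⟨M, hM⟩ : ∃ M, M = soMat g := ⟨_, rfl⟩
  obtain ⟨t, htdef⟩ : ∃ t, t = M.trace := ⟨_, rfl⟩
  have hgQ : ∀ i j, inQ3 (M i j) := by rw [hM]; exact hg
  have horth : Mᵀ * M = 1 := by rw [hM]; exact soMat_orth g
  have hdet : M.det = 1 := by rw [hM]; exact soMat_det g
  have hadj : M.adjugate = Mᵀ := by rw [hM]; exact adj_eq g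
  -- trace is in ℚ(√3)
  have ht : inQ3 t := by
    rw [htdef, Matrix.trace_fin_three]
    exact inQ3_add (inQ3_add (hgQ 0 0) (hgQ 1 1)) (hgQ 2 2)
  -- e₂ = t
  have he2 : (M.adjugate).trace = t := by
    rw [hadj, Matrix.trace_transpose, htdef]
  -- Cayley-Hamilton
  have hCH : M * M * M = t • (M * M) - t • M + 1 := by
    have := ch3 M
    rwa [he2, hdet, one_smul, ← htdef] at this
  have hs2 : (M * M).trace = t ^ 2 - 2 * t := by rw [tr_sq, he2, ← htdef]
  have hs3 : (M * M * M).trace = t * (t ^ 2 - 2 * t) - t * t + 3 := by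
    rw [hCH]
    simp only [Matrix.trace_add, Matrix.trace_sub, Matrix.trace_smul, Matrix.trace_one,
      hs2, smul_eq_mul, ← htdef]
    norm_num
  have h4 : M * M * M * M = t • (M * M * M) - t • (M * M) + M := by
    have h := congrArg (· * M) hCH
    simp only [sub_mul, add_mul, smul_mul_assoc, one_mul] at h
    exact h
  have hs4 : (M * M * M * M).trace
      = t * ((M * M * M).trace) - t * (t ^ 2 - 2 * t) + t := by
    rw [h4]
    simp only [Matrix.trace_add, Matrix.trace_sub, Matrix.trace_smul, hs2, smul_eq_mul, ← htdef]
  have h5' : M * M * M * M * M = 1 := by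
    have hg5 : g ^ 5 = 1 := by rw [← h5]; exact pow_orderOf_eq_one g
    have hg5' := congrArg soMat hg5
    rw [soMat_pow, soMat_one, ← hM] at hg5'
    simpa [pow_succ] using hg5'
  have hs5 : (M * M * M * M * M).trace = 3 := by
    rw [h5', Matrix.trace_one]; norm_num
  have h5e : M * M * M * M * M = t • (M * M * M * M) - t • (M * M * M) + M * M := by
    have h := congrArg (· * M) h4
    simp only [sub_mul, add_mul, smul_mul_assoc] at h
    exact h
  have key : (t ^ 2 - t - 1) ^ 2 * (t - 3) = 0 := by
    have e5 : t * ((M * M * M * M).trace) - t * ((M * M * M).trace) + (t ^ 2 - 2 * t) = 3 := by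
      rw [← hs2, ← hs5, h5e]
      simp only [Matrix.trace_add, Matrix.trace_sub, Matrix.trace_smul, smul_eq_mul]
    rw [hs4, hs3] at e5
    linear_combination e5
  rcases mul_eq_zero.1 key with hq | h3
  · have hq' : t ^ 2 - t - 1 = 0 := pow_eq_zero_iff (n := 2) (by norm_num) |>.1 hq
    exact no_golden t ht (by linarith)
  · -- t = 3 forces M = 1, so g = 1, contradicting order 5
    have htr : t = 3 := by linarith
    have col : ∀ i j : Fin 3, (M 0 i * M 0 j + M 1 i * M 1 j + M 2 i * M 2 j)
        = if i = j then 1 else 0 := by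
      intro i j
      have := congrFun (congrFun horth i) j
      rw [Matrix.mul_apply, Fin.sum_univ_three] at this
      simpa [Matrix.transpose_apply, Matrix.one_apply] using this
    have c0 := col 0 0; have c1 := col 1 1; have c2 := col 2 2
    norm_num at c0 c1 c2
    have htr' : M 0 0 + M 1 1 + M 2 2 = 3 := by
      rw [← htr, htdef, Matrix.trace_fin_three]
    clear hCH h4 h5e h5' horth hadj col hs2 hs3 hs4 hs5 key hgQ ht hdet htdef htr h3
    have b0 : M 0 0 ≤ 1 := by nlinarith [c0, mul_self_nonneg (M 1 0), mul_self_nonneg (M 2 0)]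
    have b1 : M 1 1 ≤ 1 := by nlinarith [c1, mul_self_nonneg (M 0 1), mul_self_nonneg (M 2 1)]
    have b2 : M 2 2 ≤ 1 := by nlinarith [c2, mul_self_nonneg (M 0 2), mul_self_nonneg (M 1 2)]
    have d0 : M 0 0 = 1 := by linarith
    have d1 : M 1 1 = 1 := by linarith
    have d2 : M 2 2 = 1 := by linarith
    rw [d0] at c0; rw [d1] at c1; rw [d2] at c2
    have o10 : M 1 0 = 0 := mul_self_eq_zero.1 (by
      linarith [mul_self_nonneg (M 2 0), mul_self_nonneg (M 1 0)])
    have o20 : M 2 0 = 0 := mul_self_eq_zero.1 (by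
      linarith [mul_self_nonneg (M 1 0), mul_self_nonneg (M 2 0)])
    have o01 : M 0 1 = 0 := mul_self_eq_zero.1 (by
      linarith [mul_self_nonneg (M 2 1), mul_self_nonneg (M 0 1)])
    have o21 : M 2 1 = 0 := mul_self_eq_zero.1 (by
      linarith [mul_self_nonneg (M 0 1), mul_self_nonneg (M 2 1)])
    have o02 : M 0 2 = 0 := mul_self_eq_zero.1 (by
      linarith [mul_self_nonneg (M 1 2), mul_self_nonneg (M 0 2)])
    have o12 : M 1 2 = 0 := mul_self_eq_zero.1 (by
      linarith [mul_self_nonneg (M 0 2), mul_self_nonneg (M 1 2)])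
    have hMone : M = 1 := by
      ext i j
      fin_cases i <;> fin_cases j <;> simp [Matrix.one_apply] <;>
        first
          | exact d0 | exact d1 | exact d2 | exact o10 | exact o20 | exact o01
          | exact o21 | exact o02 | exact o12
    have hg1 : g = 1 := soMat_inj (by rw [← hM, hMone, soMat_one])
    rw [hg1, orderOf_one] at h5
    norm_num at h5

end Aux

/-- The groups `G(6,4)` and `G(10,4)`, the subgroups of `SO(3)` generated by
`{R_x^{2π/6}, R_y^{2π/4}}` and `{R_x^{2π/10}, R_y^{2π/4}}` respectively, are not c-equivalent:
`G(10,4)` contains an element of order `5` but `G(6,4)` contains no element of order `5`. -/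
theorem stmt10 (A₆ A₁₀ B₄ : SO3)
    (hA₆ : soMat A₆ = Rx (2 * π / 6)) (hA₁₀ : soMat A₁₀ = Rx (2 * π / 10))
    (hB₄ : soMat B₄ = Ry (2 * π / 4)) :
    (∃ g ∈ Subgroup.closure {A₁₀, B₄}, orderOf g = 5) ∧
      (∀ g ∈ Subgroup.closure {A₆, B₄}, orderOf g ≠ 5) ∧
      ¬ CEquiv (Subgroup.closure {A₆, B₄}) (Subgroup.closure {A₁₀, B₄}) := by
  haveI : Fact (Nat.Prime 5) := ⟨by norm_num⟩
  -- Part 1: A₁₀ ^ 2 has order 5.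
  have part1 : ∃ g ∈ Subgroup.closure {A₁₀, B₄}, orderOf g = 5 := by
    refine ⟨A₁₀ ^ 2, pow_mem (Subgroup.subset_closure (Set.mem_insert _ _)) 2, ?_⟩
    have hpow : soMat ((A₁₀ ^ 2) ^ 5) = 1 := by
      rw [soMat_pow, soMat_pow, hA₁₀]
      have : Rx (2 * π / 10) ^ 2 = Rx (2 * π / 5) := by
        rw [sq, Rx_mul]; ring_nf
      rw [this, show (5 : ℕ) = 4 + 1 by rfl, pow_succ, pow_succ, pow_succ, pow_succ, pow_one,
        Rx_mul, Rx_mul, Rx_mul, Rx_mul, show 2*π/5 + 2*π/5 + 2*π/5 + 2*π/5 + 2*π/5 = 2*π by ring,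
        Rx_two_pi]
    have h51 : (A₁₀ ^ 2) ^ 5 = 1 := soMat_inj (by rw [hpow, soMat_one])
    refine orderOf_eq_prime h51 ?_
    intro hone
    have : soMat (A₁₀ ^ 2) = 1 := by rw [hone, soMat_one]
    rw [soMat_pow, hA₁₀, sq, Rx_mul] at this
    have hcos : Real.cos (2 * π / 10 + 2 * π / 10) = 1 := by
      have := congrFun (congrFun this 1) 1
      simpa [Rx, Matrix.one_apply] using this
    have hlt : 2 * π / 10 + 2 * π / 10 < 2 * π := by nlinarith [Real.pi_pos]
    have hgt : -(2 * π) < 2 * π / 10 + 2 * π / 10 := by nlinarith [Real.pi_pos]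
    have := (Real.cos_eq_one_iff_of_lt_of_lt hgt hlt).1 hcos
    nlinarith [Real.pi_pos]
  -- Part 2: no element of order 5 in G(6,4).
  have part2 : ∀ g ∈ Subgroup.closure {A₆, B₄}, orderOf g ≠ 5 := by
    have hK : Subgroup.closure {A₆, B₄} ≤ K3 := by
      rw [Subgroup.closure_le]
      intro x hx
      rcases hx with hx | hx
      · subst hx
        intro i j
        have h6 : soMat x = !![1, 0, 0; 0, 1/2, -(Real.sqrt 3 / 2); 0, Real.sqrt 3 / 2, 1/2] := by
          rw [hA₆, show 2 * π / 6 = π / 3 by ring, Rx, Real.cos_pi_div_three,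
            Real.sin_pi_div_three]
        rw [h6]
        fin_cases i <;> fin_cases j <;>
          first
            | (refine ⟨1, 0, ?_⟩; norm_num; done)
            | (refine ⟨0, 0, ?_⟩; norm_num; done)
            | (refine ⟨1/2, 0, ?_⟩; norm_num; done)
            | (refine ⟨0, 1/2, ?_⟩; push_cast; norm_num; done)
            | (refine ⟨0, -(1/2), ?_⟩; push_cast; norm_num; done)
            | (refine ⟨0, 1/2, ?_⟩; push_cast; norm_num; ring; done)
            | (refine ⟨0, -(1/2), ?_⟩; push_cast; norm_num; ring; done)
            | (refine ⟨0, 1/2, ?_⟩; change Real.sqrt 3 / 2 = _; push_cast; ring; done)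
            | (refine ⟨0, -(1/2), ?_⟩; change -(Real.sqrt 3 / 2) = _; push_cast; ring; done)
      · rw [Set.mem_singleton_iff] at hx
        subst hx
        intro i j
        have h4 : soMat x = !![0, 0, 1; 0, 1, 0; -1, 0, 0] := by
          rw [hB₄, show 2 * π / 4 = π / 2 by ring, Ry, Real.cos_pi_div_two, Real.sin_pi_div_two]
        rw [h4]
        fin_cases i <;> fin_cases j <;>
          first
            | (refine ⟨1, 0, ?_⟩; norm_num; done)
            | (refine ⟨0, 0, ?_⟩; norm_num; done)
            | (refine ⟨-1, 0, ?_⟩; norm_num; done)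
    intro g hg
    exact no_order_five g (hK hg)
  refine ⟨part1, part2, ?_⟩
  rintro ⟨-, hle⟩
  obtain ⟨g, hg⟩ := hle
  obtain ⟨x, hx, hx5⟩ := part1
  have hmem : (MulAut.conj g) x ∈ Subgroup.map (MulAut.conj g).toMonoidHom
      (Subgroup.closure {A₁₀, B₄}) := Subgroup.mem_map_of_mem _ hx
  have h5 : orderOf ((MulAut.conj g) x) = 5 :=
    (orderOf_injective (MulAut.conj g).toMonoidHom (MulAut.conj g).injective x).trans hx5
  exact part2 _ (hg hmem) h5
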